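/- Suppose u : ℝⁿ → ℝ is semiconcave with constant C and v : ℝⁿ → ℝ is semiconvex with constant C, u ≥ v, and u(x₀) = v(x₀). Then for all x₁, x₂ ∈ A = {u = v} and all θ ∈ ℝⁿ, ⟨Du(x₁) − Du(x₂), θ⟩ ≤ C|x₂−x₁|² + C|x₂−x₁||θ| + 2C|θ|². -/

import Mathlib

/-!
At a contact point `x` of `v ≤ u`, semiconcavity of `u` gives an upper quadratic support
`u y ≤ u x + ⟪p, y - x⟫ + C/2 ‖y - x‖²` (a subgradient of the convex function `C/2 ‖·‖² - u`),
and semiconvexity of `v` a lower one `v x + ⟪q, y - x⟫ - C/2 ‖y - x‖² ≤ v y`. Squeezed between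
them, `u - v ≥ 0` forces `p = q`, so `u` is differentiable at `x` with `∇u x = p`, and also
`0 ≤ C`. Evaluating the upper support at `x₂` at the point `x₁ + θ`, and the lower supports at
`x₁` (at `x₁ + θ`) and at `x₂` (at `x₁`), gives
`⟪∇u x₁ - ∇u x₂, θ⟫ ≤ C/2 (‖θ‖² + ‖x₁ - x₂‖² + ‖x₁ - x₂ + θ‖²)`; then apply the triangle
inequality.
-/

/-- `u` is semiconcave with linear modulus and constant `C` on `ℝⁿ`. -/
def Semiconcave {n : ℕ} (C : ℝ) (u : EuclideanSpace ℝ (Fin n) → ℝ) : Prop :=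
  ∀ x y : EuclideanSpace ℝ (Fin n), ∀ lam ∈ Set.Icc (0:ℝ) 1,
    lam * u x + (1 - lam) * u y - u (lam • x + (1 - lam) • y) ≤
      C / 2 * lam * (1 - lam) * ‖x - y‖ ^ 2

open Set Filter Topology RealInnerProductSpace

theorem ConvexOn.exists_subgradient {E : Type*} [TopologicalSpace E] [AddCommGroup E]
    [Module ℝ E] [IsTopologicalAddGroup E] [ContinuousSMul ℝ E] {f : E → ℝ}
    (hf : ConvexOn ℝ univ f) (hcont : Continuous f) (x : E) :
    ∃ ℓ : StrongDual ℝ E, ∀ y, f x + ℓ (y - x) ≤ f y := by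
  have hconv : Convex ℝ {q : E × ℝ | f q.1 < q.2} := by
    simpa using hf.convex_strict_epigraph
  have hopen : IsOpen {q : E × ℝ | f q.1 < q.2} :=
    isOpen_lt (hcont.comp continuous_fst) continuous_snd
  -- The separating functional has positive `ℝ`-coefficient `c`, so the hyperplane is a graph.
  obtain ⟨L, hL⟩ := geometric_hahn_banach_point_open hconv hopen
    (show (x, f x) ∉ {q : E × ℝ | f q.1 < q.2} from lt_irrefl (f x))
  set φ := L.comp (ContinuousLinearMap.inl ℝ E ℝ)
  set c := L (0, 1)
  have hL_apply : ∀ y t, L (y, t) = φ y + t * c := by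
    intro y t
    rw [show (y, t) = (y, 0) + t • ((0 : E), (1 : ℝ)) by simp, map_add, map_smul, smul_eq_mul]
    rfl
  have hsep : ∀ y t, f y < t → φ x + f x * c < φ y + t * c := by
    intro y t ht
    simpa only [hL_apply] using hL (y, t) ht
  have hc : 0 < c := by
    have := hsep x (f x + 1) (by linarith)
    linarith
  have hsupp : ∀ y, φ x + f x * c ≤ φ y + f y * c := fun y =>
    le_of_forall_pos_lt_add fun ε hε => by
      have := hsep y (f y + ε / c) (by linarith [div_pos hε hc])
      rwa [add_mul, div_mul_cancel₀ _ hc.ne', ← add_assoc] at this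
  refine ⟨-c⁻¹ • φ, fun y => ?_⟩
  have key : f x - f y ≤ c⁻¹ * (φ y - φ x) := by
    rw [← div_eq_inv_mul, le_div_iff₀ hc]
    linarith [hsupp y]
  rw [smul_apply, map_sub, smul_eq_mul]
  linarith

section InnerProductSpace

variable {E : Type*} [NormedAddCommGroup E] [InnerProductSpace ℝ E]

theorem norm_smul_add_smul_sq {a b : ℝ} (hab : a + b = 1) (x y : E) :
    ‖a • x + b • y‖ ^ 2 = a * ‖x‖ ^ 2 + b * ‖y‖ ^ 2 - a * b * ‖x - y‖ ^ 2 := by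
  simp only [← real_inner_self_eq_norm_sq, inner_add_left, inner_add_right, inner_sub_left,
    inner_sub_right, real_inner_smul_left, real_inner_smul_right, real_inner_comm x y]
  linear_combination (a * ⟪x, x⟫ + b * ⟪y, y⟫) * hab

theorem eq_zero_of_forall_inner_le_mul_norm_sq {d : E} {C : ℝ} (h : ∀ y, ⟪d, y⟫ ≤ C * ‖y‖ ^ 2) :
    d = 0 := by
  set t := (2 * (|C| + 1))⁻¹
  have ht : 0 < t := by positivity
  have hCt : C * t ≤ 1 / 2 := by
    rw [← div_eq_mul_inv, div_le_iff₀ (by positivity)]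
    linarith [le_abs_self C]
  have hd := h (t • d)
  rw [real_inner_smul_right, real_inner_self_eq_norm_sq, norm_smul, Real.norm_of_nonneg ht.le,
    mul_pow] at hd
  have : ‖d‖ ^ 2 ≤ 0 := by
    nlinarith [mul_le_mul_of_nonneg_right hCt (by positivity : 0 ≤ t * ‖d‖ ^ 2)]
  simpa using this

theorem hasGradientAt_of_abs_sub_inner_le [CompleteSpace E] {u : E → ℝ} {p x : E} {K : ℝ}
    (hbound : ∀ h, |u (x + h) - u x - ⟪p, h⟫| ≤ K * ‖h‖ ^ 2) : HasGradientAt u p x := by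
  rw [hasGradientAt_iff_hasFDerivAt, hasFDerivAt_iff_isLittleO_nhds_zero]
  refine (Asymptotics.IsBigO.of_bound K (Eventually.of_forall fun h => ?_)).trans_isLittleO
    (Asymptotics.isLittleO_norm_pow_id one_lt_two)
  simpa [InnerProductSpace.toDual_apply_apply] using hbound h

variable {u v : E → ℝ} {C : ℝ}

theorem eq_of_quadratic_supports {x p q : E} (huv : ∀ y, v y ≤ u y) (hx : u x = v x)
    (hp : ∀ y, u y ≤ u x + ⟪p, y - x⟫ + C / 2 * ‖y - x‖ ^ 2)
    (hq : ∀ y, v x + ⟪q, y - x⟫ - C / 2 * ‖y - x‖ ^ 2 ≤ v y) : q = p := by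
  refine sub_eq_zero.1 (eq_zero_of_forall_inner_le_mul_norm_sq (C := C) fun h => ?_)
  have hu := hp (x + h)
  have hv := hq (x + h)
  rw [add_sub_cancel_left] at hu hv
  linarith [huv (x + h), inner_sub_left (𝕜 := ℝ) q p h]

theorem hasGradientAt_of_quadratic_supports [CompleteSpace E] {x p : E} (huv : ∀ y, v y ≤ u y)
    (hx : u x = v x) (hp : ∀ y, u y ≤ u x + ⟪p, y - x⟫ + C / 2 * ‖y - x‖ ^ 2)
    (hq : ∀ y, v x + ⟪p, y - x⟫ - C / 2 * ‖y - x‖ ^ 2 ≤ v y) : HasGradientAt u p x := by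
  refine hasGradientAt_of_abs_sub_inner_le (K := C / 2) fun h => abs_le.2 ⟨?_, ?_⟩
  all_goals
    have hu := hp (x + h)
    have hv := hq (x + h)
    rw [add_sub_cancel_left] at hu hv
    linarith [huv (x + h)]

theorem nonneg_of_quadratic_supports {x p y : E} (huv : ∀ y, v y ≤ u y) (hx : u x = v x)
    (hp : ∀ y, u y ≤ u x + ⟪p, y - x⟫ + C / 2 * ‖y - x‖ ^ 2)
    (hq : ∀ y, v x + ⟪p, y - x⟫ - C / 2 * ‖y - x‖ ^ 2 ≤ v y) (hy : y ≠ x) : 0 ≤ C := by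
  have hpos : 0 < ‖y - x‖ ^ 2 := pow_pos (norm_pos_iff.2 (sub_ne_zero.2 hy)) 2
  have : 0 ≤ C * ‖y - x‖ ^ 2 := by linarith [hp y, hq y, huv y]
  exact nonneg_of_mul_nonneg_left this hpos

theorem inner_sub_le_of_quadratic_supports {x₁ x₂ p₁ p₂ : E} (hC : 0 ≤ C)
    (huv : ∀ y, v y ≤ u y) (hx₂ : u x₂ = v x₂)
    (hu₂ : ∀ y, u y ≤ u x₂ + ⟪p₂, y - x₂⟫ + C / 2 * ‖y - x₂‖ ^ 2)
    (hv₁ : ∀ y, v x₁ + ⟪p₁, y - x₁⟫ - C / 2 * ‖y - x₁‖ ^ 2 ≤ v y)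
    (hv₂ : ∀ y, v x₂ + ⟪p₂, y - x₂⟫ - C / 2 * ‖y - x₂‖ ^ 2 ≤ v y) (θ : E) :
    ⟪p₁ - p₂, θ⟫ ≤ C * ‖x₂ - x₁‖ ^ 2 + C * ‖x₂ - x₁‖ * ‖θ‖ + C * ‖θ‖ ^ 2 := by
  have hu := hu₂ (x₁ + θ)
  have hv := hv₁ (x₁ + θ)
  have hv' := hv₂ x₁
  rw [add_sub_cancel_left] at hv
  rw [show x₁ + θ - x₂ = (x₁ - x₂) + θ by abel, inner_add_right] at hu
  rw [norm_sub_rev] at hv'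
  have htri : ‖x₁ - x₂ + θ‖ ≤ ‖x₂ - x₁‖ + ‖θ‖ := norm_sub_rev x₁ x₂ ▸ norm_add_le _ _
  have hsq := mul_le_mul_of_nonneg_left (pow_le_pow_left₀ (norm_nonneg _) htri 2)
    (by positivity : 0 ≤ C / 2)
  rw [inner_sub_left]
  nlinarith [huv (x₁ + θ)]

end InnerProductSpace

section EuclideanSpace

variable {n : ℕ} {C : ℝ} {u v : EuclideanSpace ℝ (Fin n) → ℝ}

theorem Semiconcave.convexOn_sub (hu : Semiconcave C u) :
    ConvexOn ℝ univ (fun y => C / 2 * ‖y‖ ^ 2 - u y) := by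
  refine ⟨convex_univ, fun x _ y _ a b ha hb hab => ?_⟩
  obtain rfl : b = 1 - a := by linarith
  have h := hu x y a ⟨ha, by linarith⟩
  simp only [smul_eq_mul, norm_smul_add_smul_sq hab]
  nlinarith

theorem Semiconcave.exists_upper_support (hu : Semiconcave C u) (x : EuclideanSpace ℝ (Fin n)) :
    ∃ p, ∀ y, u y ≤ u x + ⟪p, y - x⟫ + C / 2 * ‖y - x‖ ^ 2 := by
  have hconv := hu.convexOn_sub
  obtain ⟨ℓ, hℓ⟩ := hconv.exists_subgradient
    (continuousOn_univ.1 (hconv.continuousOn isOpen_univ)) x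
  refine ⟨C • x - (InnerProductSpace.toDual ℝ _).symm ℓ, fun y => ?_⟩
  have h := hℓ y
  have hy : ‖y‖ ^ 2 = ‖x‖ ^ 2 + 2 * ⟪x, y - x⟫ + ‖y - x‖ ^ 2 := by
    simpa using norm_add_sq_real x (y - x)
  rw [← InnerProductSpace.toDual_symm_apply, hy] at h
  rw [inner_sub_left, real_inner_smul_left]
  linarith

theorem Semiconcave.gradient_quadratic_supports (hu : Semiconcave C u)
    (hv : Semiconcave C fun x => -v x) (huv : ∀ y, v y ≤ u y) {x : EuclideanSpace ℝ (Fin n)}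
    (hx : u x = v x) :
    (∀ y, u y ≤ u x + ⟪gradient u x, y - x⟫ + C / 2 * ‖y - x‖ ^ 2) ∧
      ∀ y, v x + ⟪gradient u x, y - x⟫ - C / 2 * ‖y - x‖ ^ 2 ≤ v y := by
  obtain ⟨p, hp⟩ := hu.exists_upper_support x
  obtain ⟨q, hq⟩ := hv.exists_upper_support x
  have hq' : ∀ y, v x + ⟪-q, y - x⟫ - C / 2 * ‖y - x‖ ^ 2 ≤ v y := fun y => by
    linarith [hq y, inner_neg_left (𝕜 := ℝ) q (y - x)]
  rw [eq_of_quadratic_supports huv hx hp hq'] at hq'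
  rw [(hasGradientAt_of_quadratic_supports huv hx hp hq').gradient]
  exact ⟨hp, hq'⟩

end EuclideanSpace

theorem stmt17_general {n : ℕ} (C : ℝ) (u v : EuclideanSpace ℝ (Fin n) → ℝ)
    (hu : Semiconcave C u) (hv : Semiconcave C (fun x => -v x))
    (huv : ∀ x, v x ≤ u x)
    (A : Set (EuclideanSpace ℝ (Fin n))) (hA : A = {x | u x = v x}) :
    ∀ x₁ ∈ A, ∀ x₂ ∈ A, ∀ θ : EuclideanSpace ℝ (Fin n),
      (inner ℝ (gradient u x₁ - gradient u x₂) θ : ℝ) ≤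
        C * ‖x₂ - x₁‖ ^ 2 + C * ‖x₂ - x₁‖ * ‖θ‖ + 2 * C * ‖θ‖ ^ 2 := by
  subst hA
  intro x₁ hx₁ x₂ hx₂ θ
  obtain ⟨hu₁, hv₁⟩ := hu.gradient_quadratic_supports hv huv hx₁
  obtain ⟨hu₂, hv₂⟩ := hu.gradient_quadratic_supports hv huv hx₂
  rcases subsingleton_or_nontrivial (EuclideanSpace ℝ (Fin n)) with hE | hE
  · simp [Subsingleton.elim θ 0, Subsingleton.elim x₂ x₁]
  obtain ⟨y, hy⟩ := exists_ne x₁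
  have hC := nonneg_of_quadratic_supports huv hx₁ hu₁ hv₁ hy
  have := inner_sub_le_of_quadratic_supports hC huv hx₂ hu₂ hv₁ hv₂ θ
  linarith [mul_nonneg hC (sq_nonneg ‖θ‖)]

theorem stmt17 {n : ℕ} (C : ℝ) (u v : EuclideanSpace ℝ (Fin n) → ℝ)
    (hu : Semiconcave C u) (hv : Semiconcave C (fun x => -v x))
    (huv : ∀ x, v x ≤ u x) (x₀ : EuclideanSpace ℝ (Fin n)) (hx₀ : u x₀ = v x₀)
    (A : Set (EuclideanSpace ℝ (Fin n))) (hA : A = {x | u x = v x}) :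
    ∀ x₁ ∈ A, ∀ x₂ ∈ A, ∀ θ : EuclideanSpace ℝ (Fin n),
      (inner ℝ (gradient u x₁ - gradient u x₂) θ : ℝ) ≤
        C * ‖x₂ - x₁‖ ^ 2 + C * ‖x₂ - x₁‖ * ‖θ‖ + 2 * C * ‖θ‖ ^ 2 :=
  stmt17_general C u v hu hv huv A hA
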